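/- Fourth-order divergence identity (identity I₁₃ in the Appendix). Let n ≥ 1, let w : ℝⁿ → ℝ be four times continuously differentiable, and for 1 ≤ k, l ≤ n let Φ^{kl} : ℝⁿ → ℝ be twice continuously differentiable with Φ^{kl} = Φ^{lk}. Write ∂_i for ∂/∂x_i, w_i = ∂_i w, w_{ij} = ∂_i ∂_j w, w_{iij} = ∂_i ∂_i ∂_j w, w_{iijj} = ∂_i ∂_i ∂_j ∂_j w. Then at every point of ℝⁿ (all sums ranging over indices from 1 to n): Σ_{i,j,k,l} Φ^{kl} w_{iijj} w_{kl} = Σ_j ∂_j [ Σ_{i,k,l} ( Φ^{kl} w_{iij} w_{kl} − Φ^{kj} w_{iil} w_{kl} + Φ^{kl} w_{iil} w_{kj} − (∂_i Φ^{kl}) w_{ij} w_{kl} + (∂_l Φ^{kj}) w_{il} w_{ik} + (∂_l Φ^{kl}) w_{ij} w_{ik} − (1/2) (∂_l Φ^{jl}) (w_{ik})² − (∂_i Φ^{kl}) w_{jl} w_{ik} ) ] − Σ_{i,j,k,l} Φ^{kl} w_{iil} w_{kjj} + Σ_{i,j,k,l} (∂_i ∂_j Φ^{kl}) w_{ij}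 w_{kl} − Σ_{i,j,k,l} (∂_l ∂_j Φ^{kl}) w_{ij} w_{ik} − Σ_{i,j,k,l} (∂_i ∂_l Φ^{kl}) w_{ij} w_{kj} + Σ_{i,j,k,l} (∂_i ∂_j Φ^{kl}) w_{il} w_{kj} + (1/2) Σ_{i,j,k,l} (∂_k ∂_l Φ^{kl}) (w_{ij})². -/

import Mathlib

/-- `i`-th partial derivative of `f : ℝⁿ → ℝ`. -/
noncomputable def pderiv' {n : ℕ} (i : Fin n)
    (f : EuclideanSpace ℝ (Fin n) → ℝ) : EuclideanSpace ℝ (Fin n) → ℝ :=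
  fun x => fderiv ℝ f x (EuclideanSpace.single i 1)

section auxLemmas
variable {n : ℕ} {x : EuclideanSpace ℝ (Fin n)} {j : Fin n}
variable {f g h : EuclideanSpace ℝ (Fin n) → ℝ}

lemma contDiff_pderiv' {m : ℕ} (hf : ContDiff ℝ (m + 1 : ℕ) f) (i : Fin n) :
    ContDiff ℝ (m : ℕ) (pderiv' i f) := by
  have h : ContDiff ℝ (m : ℕ) (fderiv ℝ f) := hf.fderiv_right (by exact_mod_cast le_rfl)
  exact h.clm_apply contDiff_const

lemma differentiable_pderiv' (hf : ContDiff ℝ 2 f) (i : Fin n) :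
    Differentiable ℝ (pderiv' i f) := by
  have h2 : ContDiff ℝ ((1:ℕ) + 1 : ℕ) f := by exact_mod_cast hf
  have h1 : ContDiff ℝ ((1:ℕ) : ℕ) (pderiv' i f) := contDiff_pderiv' h2 i
  exact h1.differentiable (by norm_num)

lemma pderiv'_pderiv' (hf : ContDiffAt ℝ 2 f x) (a b : Fin n) :
    pderiv' a (pderiv' b f) x
      = fderiv ℝ (fderiv ℝ f) x (EuclideanSpace.single a 1) (EuclideanSpace.single b 1) := by
  have hdiff : DifferentiableAt ℝ (fderiv ℝ f) x :=
    (hf.fderiv_right (m := 1) (by norm_num)).differentiableAt (by norm_num)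
  show fderiv ℝ (fun y => (fderiv ℝ f y) (EuclideanSpace.single b 1)) x _ = _
  rw [fderiv_clm_apply hdiff (differentiableAt_const _)]
  simp

lemma pderiv'_comm (hf : ContDiff ℝ 2 f) (a b : Fin n) :
    pderiv' a (pderiv' b f) = pderiv' b (pderiv' a f) := by
  funext y
  rw [pderiv'_pderiv' hf.contDiffAt, pderiv'_pderiv' hf.contDiffAt]
  exact (hf.contDiffAt.isSymmSndFDerivAt (by simp)) _ _

lemma pderiv'_mul (hf : DifferentiableAt ℝ f x) (hg : DifferentiableAt ℝ g x) :
    pderiv' j (fun y => f y * g y) x = pderiv' j f x * g x + f x * pderiv' j g x := by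
  show fderiv ℝ (fun y => f y * g y) x _ = _
  rw [fderiv_fun_mul hf hg]
  simp [pderiv']
  ring

lemma pderiv'_add (hf : DifferentiableAt ℝ f x) (hg : DifferentiableAt ℝ g x) :
    pderiv' j (fun y => f y + g y) x = pderiv' j f x + pderiv' j g x := by
  show fderiv ℝ (fun y => f y + g y) x _ = _
  rw [fderiv_fun_add hf hg]; simp [pderiv']

lemma pderiv'_sub (hf : DifferentiableAt ℝ f x) (hg : DifferentiableAt ℝ g x) :
    pderiv' j (fun y => f y - g y) x = pderiv' j f x - pderiv' j g x := by
  show fderiv ℝ (fun y => f y - g y) x _ = _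
  rw [fderiv_fun_sub hf hg]; simp [pderiv']

lemma pderiv'_mul3 (hf : DifferentiableAt ℝ f x) (hg : DifferentiableAt ℝ g x)
    (hh : DifferentiableAt ℝ h x) :
    pderiv' j (fun y => f y * g y * h y) x
      = pderiv' j f x * g x * h x + f x * pderiv' j g x * h x + f x * g x * pderiv' j h x := by
  rw [pderiv'_mul (hf.fun_mul hg) hh, pderiv'_mul hf hg]; ring

lemma pderiv'_const_mul (c : ℝ) (hf : DifferentiableAt ℝ f x) :
    pderiv' j (fun y => c * f y) x = c * pderiv' j f x := by
  show fderiv ℝ (fun y => c * f y) x _ = _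
  rw [fderiv_const_mul hf]; simp [pderiv']

lemma pderiv'_halfsq (hf : DifferentiableAt ℝ f x) (hg : DifferentiableAt ℝ g x) :
    pderiv' j (fun y => 1 / 2 * f y * g y ^ 2) x
      = 1 / 2 * pderiv' j f x * g x ^ 2 + f x * (g x * pderiv' j g x) := by
  have e : (fun y => 1 / 2 * f y * g y ^ 2) = fun y => (1 / 2 * f y) * (g y * g y) := by
    funext y; ring
  rw [e, pderiv'_mul ((differentiableAt_const _).fun_mul hf) (hg.fun_mul hg),
    pderiv'_const_mul _ hf, pderiv'_mul hg hg]
  ring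

lemma pderiv'_sum {ι : Type*} (s : Finset ι) (F : ι → EuclideanSpace ℝ (Fin n) → ℝ)
    (hF : ∀ i ∈ s, DifferentiableAt ℝ (F i) x) :
    pderiv' j (fun y => ∑ i ∈ s, F i y) x = ∑ i ∈ s, pderiv' j (F i) x := by
  show fderiv ℝ (fun y => ∑ i ∈ s, F i y) x _ = _
  rw [fderiv_fun_sum hF]
  simp [pderiv']

lemma pderiv'_key (f1 g1 h1 f2 g2 h2 f3 g3 h3 f4 g4 h4 f5 g5 h5 f6 g6 h6 p q f8 g8 h8 :
      EuclideanSpace ℝ (Fin n) → ℝ)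
    (df1 : DifferentiableAt ℝ f1 x) (dg1 : DifferentiableAt ℝ g1 x) (dh1 : DifferentiableAt ℝ h1 x)
    (df2 : DifferentiableAt ℝ f2 x) (dg2 : DifferentiableAt ℝ g2 x) (dh2 : DifferentiableAt ℝ h2 x)
    (df3 : DifferentiableAt ℝ f3 x) (dg3 : DifferentiableAt ℝ g3 x) (dh3 : DifferentiableAt ℝ h3 x)
    (df4 : DifferentiableAt ℝ f4 x) (dg4 : DifferentiableAt ℝ g4 x) (dh4 : DifferentiableAt ℝ h4 x)
    (df5 : DifferentiableAt ℝ f5 x) (dg5 : DifferentiableAt ℝ g5 x) (dh5 : DifferentiableAt ℝ h5 x)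
    (df6 : DifferentiableAt ℝ f6 x) (dg6 : DifferentiableAt ℝ g6 x) (dh6 : DifferentiableAt ℝ h6 x)
    (dp : DifferentiableAt ℝ p x) (dq : DifferentiableAt ℝ q x)
    (df8 : DifferentiableAt ℝ f8 x) (dg8 : DifferentiableAt ℝ g8 x)
    (dh8 : DifferentiableAt ℝ h8 x) :
    pderiv' j (fun y =>
      f1 y * g1 y * h1 y - f2 y * g2 y * h2 y + f3 y * g3 y * h3 y
        - f4 y * g4 y * h4 y + f5 y * g5 y * h5 y + f6 y * g6 y * h6 y
        - 1 / 2 * p y * q y ^ 2 - f8 y * g8 y * h8 y) x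
    = (pderiv' j f1 x * g1 x * h1 x + f1 x * pderiv' j g1 x * h1 x
        + f1 x * g1 x * pderiv' j h1 x)
      - (pderiv' j f2 x * g2 x * h2 x + f2 x * pderiv' j g2 x * h2 x
        + f2 x * g2 x * pderiv' j h2 x)
      + (pderiv' j f3 x * g3 x * h3 x + f3 x * pderiv' j g3 x * h3 x
        + f3 x * g3 x * pderiv' j h3 x)
      - (pderiv' j f4 x * g4 x * h4 x + f4 x * pderiv' j g4 x * h4 x
        + f4 x * g4 x * pderiv' j h4 x)
      + (pderiv' j f5 x * g5 x * h5 x + f5 x * pderiv' j g5 x * h5 x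
        + f5 x * g5 x * pderiv' j h5 x)
      + (pderiv' j f6 x * g6 x * h6 x + f6 x * pderiv' j g6 x * h6 x
        + f6 x * g6 x * pderiv' j h6 x)
      - (1 / 2 * pderiv' j p x * q x ^ 2 + p x * (q x * pderiv' j q x))
      - (pderiv' j f8 x * g8 x * h8 x + f8 x * pderiv' j g8 x * h8 x
        + f8 x * g8 x * pderiv' j h8 x) := by
  have D1 := (df1.fun_mul dg1).fun_mul dh1
  have D2 := (df2.fun_mul dg2).fun_mul dh2
  have D3 := (df3.fun_mul dg3).fun_mul dh3
  have D4 := (df4.fun_mul dg4).fun_mul dh4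
  have D5 := (df5.fun_mul dg5).fun_mul dh5
  have D6 := (df6.fun_mul dg6).fun_mul dh6
  have D7 : DifferentiableAt ℝ (fun y => 1 / 2 * p y * q y ^ 2) x :=
    ((differentiableAt_const _).mul dp).mul (dq.pow 2)
  have D8 := (df8.fun_mul dg8).fun_mul dh8
  calc pderiv' j (fun y =>
      f1 y * g1 y * h1 y - f2 y * g2 y * h2 y + f3 y * g3 y * h3 y
        - f4 y * g4 y * h4 y + f5 y * g5 y * h5 y + f6 y * g6 y * h6 y
        - 1 / 2 * p y * q y ^ 2 - f8 y * g8 y * h8 y) x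
      = pderiv' j (fun y =>
          f1 y * g1 y * h1 y - f2 y * g2 y * h2 y + f3 y * g3 y * h3 y
            - f4 y * g4 y * h4 y + f5 y * g5 y * h5 y + f6 y * g6 y * h6 y
            - 1 / 2 * p y * q y ^ 2) x
        - pderiv' j (fun y => f8 y * g8 y * h8 y) x :=
      pderiv'_sub ((((((D1.sub D2).add D3).sub D4).add D5).add D6).sub D7) D8
    _ = pderiv' j (fun y =>
          f1 y * g1 y * h1 y - f2 y * g2 y * h2 y + f3 y * g3 y * h3 y
            - f4 y * g4 y * h4 y + f5 y * g5 y * h5 y + f6 y * g6 y * h6 y) x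
        - pderiv' j (fun y => 1 / 2 * p y * q y ^ 2) x
        - pderiv' j (fun y => f8 y * g8 y * h8 y) x := by
      rw [pderiv'_sub (((((D1.fun_sub D2).fun_add D3).fun_sub D4).fun_add D5).fun_add D6) D7]
    _ = pderiv' j (fun y =>
          f1 y * g1 y * h1 y - f2 y * g2 y * h2 y + f3 y * g3 y * h3 y
            - f4 y * g4 y * h4 y + f5 y * g5 y * h5 y) x
        + pderiv' j (fun y => f6 y * g6 y * h6 y) x
        - pderiv' j (fun y => 1 / 2 * p y * q y ^ 2) x
        - pderiv' j (fun y => f8 y * g8 y * h8 y) x := by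
      rw [pderiv'_add ((((D1.fun_sub D2).fun_add D3).fun_sub D4).fun_add D5) D6]
    _ = pderiv' j (fun y =>
          f1 y * g1 y * h1 y - f2 y * g2 y * h2 y + f3 y * g3 y * h3 y
            - f4 y * g4 y * h4 y) x
        + pderiv' j (fun y => f5 y * g5 y * h5 y) x
        + pderiv' j (fun y => f6 y * g6 y * h6 y) x
        - pderiv' j (fun y => 1 / 2 * p y * q y ^ 2) x
        - pderiv' j (fun y => f8 y * g8 y * h8 y) x := by
      rw [pderiv'_add (((D1.fun_sub D2).fun_add D3).fun_sub D4) D5]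
    _ = pderiv' j (fun y =>
          f1 y * g1 y * h1 y - f2 y * g2 y * h2 y + f3 y * g3 y * h3 y) x
        - pderiv' j (fun y => f4 y * g4 y * h4 y) x
        + pderiv' j (fun y => f5 y * g5 y * h5 y) x
        + pderiv' j (fun y => f6 y * g6 y * h6 y) x
        - pderiv' j (fun y => 1 / 2 * p y * q y ^ 2) x
        - pderiv' j (fun y => f8 y * g8 y * h8 y) x := by
      rw [pderiv'_sub ((D1.fun_sub D2).fun_add D3) D4]
    _ = pderiv' j (fun y => f1 y * g1 y * h1 y - f2 y * g2 y * h2 y) x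
        + pderiv' j (fun y => f3 y * g3 y * h3 y) x
        - pderiv' j (fun y => f4 y * g4 y * h4 y) x
        + pderiv' j (fun y => f5 y * g5 y * h5 y) x
        + pderiv' j (fun y => f6 y * g6 y * h6 y) x
        - pderiv' j (fun y => 1 / 2 * p y * q y ^ 2) x
        - pderiv' j (fun y => f8 y * g8 y * h8 y) x := by
      rw [pderiv'_add (D1.fun_sub D2) D3]
    _ = pderiv' j (fun y => f1 y * g1 y * h1 y) x
        - pderiv' j (fun y => f2 y * g2 y * h2 y) x
        + pderiv' j (fun y => f3 y * g3 y * h3 y) x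
        - pderiv' j (fun y => f4 y * g4 y * h4 y) x
        + pderiv' j (fun y => f5 y * g5 y * h5 y) x
        + pderiv' j (fun y => f6 y * g6 y * h6 y) x
        - pderiv' j (fun y => 1 / 2 * p y * q y ^ 2) x
        - pderiv' j (fun y => f8 y * g8 y * h8 y) x := by
      rw [pderiv'_sub D1 D2]
    _ = _ := by
      rw [pderiv'_mul3 df1 dg1 dh1, pderiv'_mul3 df2 dg2 dh2, pderiv'_mul3 df3 dg3 dh3,
        pderiv'_mul3 df4 dg4 dh4, pderiv'_mul3 df5 dg5 dh5, pderiv'_mul3 df6 dg6 dh6,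
        pderiv'_halfsq dp dq, pderiv'_mul3 df8 dg8 dh8]

end auxLemmas
section S4
variable {I : Type*} [Fintype I]

def S4 (f : I → I → I → I → ℝ) : ℝ := ∑ i, ∑ j, ∑ k, ∑ l, f i j k l

lemma S4_congr {f g : I → I → I → I → ℝ} (h : ∀ i j k l, f i j k l = g i j k l) :
    S4 f = S4 g := by
  unfold S4
  exact Finset.sum_congr rfl fun i _ => Finset.sum_congr rfl fun j _ =>
    Finset.sum_congr rfl fun k _ => Finset.sum_congr rfl fun l _ => h i j k l

lemma S4_prod (f : I → I → I → I → ℝ) :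
    S4 f = ∑ p : I × I × I × I, f p.1 p.2.1 p.2.2.1 p.2.2.2 := by
  simp [S4, Fintype.sum_prod_type]

lemma S4_perm (f : I → I → I → I → ℝ) (σ τ : I × I × I × I → I × I × I × I)
    (h1 : ∀ p, τ (σ p) = p) (h2 : ∀ p, σ (τ p) = p) :
    S4 f = S4 (fun i j k l => f (σ (i,j,k,l)).1 (σ (i,j,k,l)).2.1
      (σ (i,j,k,l)).2.2.1 (σ (i,j,k,l)).2.2.2) := by
  rw [S4_prod, S4_prod]
  exact (Equiv.sum_comp (⟨σ, τ, h1, h2⟩ : (I×I×I×I) ≃ (I×I×I×I))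
    (fun p => f p.1 p.2.1 p.2.2.1 p.2.2.2)).symm

lemma S4_smul (c : ℝ) (f : I → I → I → I → ℝ) :
    S4 (fun i j k l => c * f i j k l) = c * S4 f := by
  simp [S4, Finset.mul_sum]

lemma alg (P : I → I → ℝ) (P1 : I → I → I → ℝ) (P2 : I → I → I → I → ℝ)
    (W2 : I → I → ℝ) (W3 : I → I → I → ℝ) (W4 : I → I → I → I → ℝ)
    (hP1 : ∀ a k l, P1 a k l = P1 a l k)
    (hP2 : ∀ a b k l, P2 a b k l = P2 b a k l)
    (hW2 : ∀ a b, W2 a b = W2 b a)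
    (hW3a : ∀ a b c, W3 a b c = W3 b a c)
    (hW3b : ∀ a b c, W3 a b c = W3 a c b)
    (hW4a : ∀ i j, W4 j i i j = W4 i i j j)
    (hW4r : ∀ a b c d, W4 a b c d = W4 d c b a) :
    (∑ i, ∑ j, ∑ k, ∑ l, P k l * W4 i i j j * W2 k l)
    = (∑ j, ∑ i, ∑ k, ∑ l,
        (P1 j k l * W3 i i j * W2 k l + P k l * W4 j i i j * W2 k l
            + P k l * W3 i i j * W3 j k l
         - (P1 j k j * W3 i i l * W2 k l + P k j * W4 j i i l * W2 k l
            + P k j * W3 i i l * W3 j k l)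
         + (P1 j k l * W3 i i l * W2 k j + P k l * W4 j i i l * W2 k j
            + P k l * W3 i i l * W3 j k j)
         - (P2 j i k l * W2 i j * W2 k l + P1 i k l * W3 j i j * W2 k l
            + P1 i k l * W2 i j * W3 j k l)
         + (P2 j l k j * W2 i l * W2 i k + P1 l k j * W3 j i l * W2 i k
            + P1 l k j * W2 i l * W3 j i k)
         + (P2 j l k l * W2 i j * W2 i k + P1 l k l * W3 j i j * W2 i k
            + P1 l k l * W2 i j * W3 j i k)
         - (1/2 * P2 j l j l * W2 i k ^ 2 + P1 l j l * (W2 i k * W3 j i k))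
         - (P2 j i k l * W2 j l * W2 i k + P1 i k l * W3 j j l * W2 i k
            + P1 i k l * W2 j l * W3 j i k)))
      - (∑ i, ∑ j, ∑ k, ∑ l, P k l * W3 i i l * W3 k j j)
      + (∑ i, ∑ j, ∑ k, ∑ l, P2 i j k l * W2 i j * W2 k l)
      - (∑ i, ∑ j, ∑ k, ∑ l, P2 l j k l * W2 i j * W2 i k)
      - (∑ i, ∑ j, ∑ k, ∑ l, P2 i l k l * W2 i j * W2 k j)
      + (∑ i, ∑ j, ∑ k, ∑ l, P2 i j k l * W2 i l * W2 k j)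
      + 1/2 * (∑ i, ∑ j, ∑ k, ∑ l, P2 k l k l * W2 i j ^ 2) := by
  have hW3r : ∀ a b c, W3 a b c = W3 c b a := fun a b c => by
    rw [hW3a, hW3b, hW3a]
  -- pairing identities
  have e1 : S4 (fun i j k l => P k l * W4 j i i j * W2 k l)
      = S4 (fun i j k l => P k l * W4 i i j j * W2 k l) :=
    S4_congr fun i j k l => by rw [hW4a]
  have e2 : S4 (fun i j k l => P1 i k l * W3 j i j * W2 k l)
      = S4 (fun i j k l => P1 j k l * W3 i i j * W2 k l) :=
    (S4_perm _ (fun p => (p.2.1, p.1, p.2.2.1, p.2.2.2))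
        (fun p => (p.2.1, p.1, p.2.2.1, p.2.2.2)) (fun _ => rfl) (fun _ => rfl)).trans
      (S4_congr fun i j k l => by rw [hW3b])
  have e3 : S4 (fun i j k l => P1 l k l * W3 j i j * W2 i k)
      = S4 (fun i j k l => P1 j k j * W3 i i l * W2 k l) :=
    (S4_perm _ (fun p => (p.2.2.2, p.1, p.2.2.1, p.2.1))
        (fun p => (p.2.1, p.2.2.2, p.2.2.1, p.1)) (fun _ => rfl) (fun _ => rfl)).trans
      (S4_congr fun i j k l => by rw [hW3b, hW2])
  have e4 : S4 (fun i j k l => P1 i k l * W3 j j l * W2 i k)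
      = S4 (fun i j k l => P1 j k l * W3 i i l * W2 k j) :=
    (S4_perm _ (fun p => (p.2.1, p.1, p.2.2.1, p.2.2.2))
        (fun p => (p.2.1, p.1, p.2.2.1, p.2.2.2)) (fun _ => rfl) (fun _ => rfl)).trans
      (S4_congr fun i j k l => by rw [hW2])
  have e5 : S4 (fun i j k l => P k j * W3 i i l * W3 j k l)
      = S4 (fun i j k l => P k l * W3 i i j * W3 j k l) :=
    (S4_perm _ (fun p => (p.1, p.2.2.2, p.2.2.1, p.2.1))
        (fun p => (p.1, p.2.2.2, p.2.2.1, p.2.1)) (fun _ => rfl) (fun _ => rfl)).trans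
      (S4_congr fun i j k l => by rw [hW3r l k j])
  have e6 : S4 (fun i j k l => P k l * W4 j i i l * W2 k j)
      = S4 (fun i j k l => P k j * W4 j i i l * W2 k l) :=
    (S4_perm _ (fun p => (p.1, p.2.2.2, p.2.2.1, p.2.1))
        (fun p => (p.1, p.2.2.2, p.2.2.1, p.2.1)) (fun _ => rfl) (fun _ => rfl)).trans
      (S4_congr fun i j k l => by rw [hW4r l i i j])
  have e7 : S4 (fun i j k l => P k l * W3 i i l * W3 j k j)
      = S4 (fun i j k l => P k l * W3 i i l * W3 k j j) :=
    S4_congr fun i j k l => by rw [hW3a j k j]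
  have e8 : S4 (fun i j k l => P2 j i k l * W2 i j * W2 k l)
      = S4 (fun i j k l => P2 i j k l * W2 i j * W2 k l) :=
    S4_congr fun i j k l => by rw [hP2 j i]
  have e9 : S4 (fun i j k l => P1 l k j * W2 i l * W3 j i k)
      = S4 (fun i j k l => P1 i k l * W2 i j * W3 j k l) :=
    (S4_perm _ (fun p => (p.2.1, p.2.2.2, p.2.2.1, p.1))
        (fun p => (p.2.2.2, p.1, p.2.2.1, p.2.1)) (fun _ => rfl) (fun _ => rfl)).trans
      (S4_congr fun i j k l => by rw [hW2 j i, hW3r l j k, hW3a k j l])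
  have e10 : S4 (fun i j k l => P2 j l k j * W2 i l * W2 i k)
      = S4 (fun i j k l => P2 i l k l * W2 i j * W2 k j) :=
    (S4_perm _ (fun p => (p.2.1, p.2.2.2, p.2.2.1, p.1))
        (fun p => (p.2.2.2, p.1, p.2.2.1, p.2.1)) (fun _ => rfl) (fun _ => rfl)).trans
      (S4_congr fun i j k l => by rw [hP2 l i, hW2 j i, hW2 j k])
  have e11 : S4 (fun i j k l => P1 l k j * W3 j i l * W2 i k)
      = S4 (fun i j k l => P1 i k l * W2 j l * W3 j i k) :=
    (S4_perm _ (fun p => (p.2.1, p.2.2.1, p.2.2.2, p.1))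
        (fun p => (p.2.2.2, p.1, p.2.1, p.2.2.1)) (fun _ => rfl) (fun _ => rfl)).trans
      (S4_congr fun i j k l => by rw [hP1 i l k, hW3r k j i, hW3a i j k]; ring)
  have e12 : S4 (fun i j k l => P2 j l k l * W2 i j * W2 i k)
      = S4 (fun i j k l => P2 l j k l * W2 i j * W2 i k) :=
    S4_congr fun i j k l => by rw [hP2 j l]
  have e13 : S4 (fun i j k l => P1 l j l * (W2 i k * W3 j i k))
      = S4 (fun i j k l => P1 l k l * W2 i j * W3 j i k) :=
    (S4_perm _ (fun p => (p.1, p.2.2.1, p.2.1, p.2.2.2))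
        (fun p => (p.1, p.2.2.1, p.2.1, p.2.2.2)) (fun _ => rfl) (fun _ => rfl)).trans
      (S4_congr fun i j k l => by rw [hW3r k i j]; ring)
  have e14 : S4 (fun i j k l => 1/2 * P2 j l j l * W2 i k ^ 2)
      = 1/2 * S4 (fun i j k l => P2 k l k l * W2 i j ^ 2) :=
    ((S4_perm _ (fun p => (p.1, p.2.2.1, p.2.1, p.2.2.2))
        (fun p => (p.1, p.2.2.1, p.2.1, p.2.2.2)) (fun _ => rfl) (fun _ => rfl)).trans
      (S4_congr (g := fun i j k l => 1/2 * (P2 k l k l * W2 i j ^ 2))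
        fun i j k l => by ring)).trans
      (S4_smul (1/2) (fun i j k l => P2 k l k l * W2 i j ^ 2))
  have e15 : S4 (fun i j k l => P2 j i k l * W2 j l * W2 i k)
      = S4 (fun i j k l => P2 i j k l * W2 i l * W2 k j) :=
    (S4_perm _ (fun p => (p.2.1, p.1, p.2.2.1, p.2.2.2))
        (fun p => (p.2.1, p.1, p.2.2.1, p.2.2.2)) (fun _ => rfl) (fun _ => rfl)).trans
      (S4_congr fun i j k l => by rw [hW2 j k])
  have hsplit : S4 (fun i j k l =>
        (P1 j k l * W3 i i j * W2 k l + P k l * W4 j i i j * W2 k l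
            + P k l * W3 i i j * W3 j k l
         - (P1 j k j * W3 i i l * W2 k l + P k j * W4 j i i l * W2 k l
            + P k j * W3 i i l * W3 j k l)
         + (P1 j k l * W3 i i l * W2 k j + P k l * W4 j i i l * W2 k j
            + P k l * W3 i i l * W3 j k j)
         - (P2 j i k l * W2 i j * W2 k l + P1 i k l * W3 j i j * W2 k l
            + P1 i k l * W2 i j * W3 j k l)
         + (P2 j l k j * W2 i l * W2 i k + P1 l k j * W3 j i l * W2 i k
            + P1 l k j * W2 i l * W3 j i k)
         + (P2 j l k l * W2 i j * W2 i k + P1 l k l * W3 j i j * W2 i k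
            + P1 l k l * W2 i j * W3 j i k)
         - (1/2 * P2 j l j l * W2 i k ^ 2 + P1 l j l * (W2 i k * W3 j i k))
         - (P2 j i k l * W2 j l * W2 i k + P1 i k l * W3 j j l * W2 i k
            + P1 i k l * W2 j l * W3 j i k)))
      = S4 (fun i j k l => P1 j k l * W3 i i j * W2 k l)
        + S4 (fun i j k l => P k l * W4 j i i j * W2 k l)
        + S4 (fun i j k l => P k l * W3 i i j * W3 j k l)
        - (S4 (fun i j k l => P1 j k j * W3 i i l * W2 k l)
          + S4 (fun i j k l => P k j * W4 j i i l * W2 k l)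
          + S4 (fun i j k l => P k j * W3 i i l * W3 j k l))
        + (S4 (fun i j k l => P1 j k l * W3 i i l * W2 k j)
          + S4 (fun i j k l => P k l * W4 j i i l * W2 k j)
          + S4 (fun i j k l => P k l * W3 i i l * W3 j k j))
        - (S4 (fun i j k l => P2 j i k l * W2 i j * W2 k l)
          + S4 (fun i j k l => P1 i k l * W3 j i j * W2 k l)
          + S4 (fun i j k l => P1 i k l * W2 i j * W3 j k l))
        + (S4 (fun i j k l => P2 j l k j * W2 i l * W2 i k)
          + S4 (fun i j k l => P1 l k j * W3 j i l * W2 i k)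
          + S4 (fun i j k l => P1 l k j * W2 i l * W3 j i k))
        + (S4 (fun i j k l => P2 j l k l * W2 i j * W2 i k)
          + S4 (fun i j k l => P1 l k l * W3 j i j * W2 i k)
          + S4 (fun i j k l => P1 l k l * W2 i j * W3 j i k))
        - (S4 (fun i j k l => 1/2 * P2 j l j l * W2 i k ^ 2)
          + S4 (fun i j k l => P1 l j l * (W2 i k * W3 j i k)))
        - (S4 (fun i j k l => P2 j i k l * W2 j l * W2 i k)
          + S4 (fun i j k l => P1 i k l * W3 j j l * W2 i k)
          + S4 (fun i j k l => P1 i k l * W2 j l * W3 j i k)) := by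
    unfold S4
    simp only [Finset.sum_add_distrib, Finset.sum_sub_distrib]
  show S4 (fun i j k l => P k l * W4 i i j j * W2 k l)
    = S4 (fun j i k l =>
        (P1 j k l * W3 i i j * W2 k l + P k l * W4 j i i j * W2 k l
            + P k l * W3 i i j * W3 j k l
         - (P1 j k j * W3 i i l * W2 k l + P k j * W4 j i i l * W2 k l
            + P k j * W3 i i l * W3 j k l)
         + (P1 j k l * W3 i i l * W2 k j + P k l * W4 j i i l * W2 k j
            + P k l * W3 i i l * W3 j k j)
         - (P2 j i k l * W2 i j * W2 k l + P1 i k l * W3 j i j * W2 k l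
            + P1 i k l * W2 i j * W3 j k l)
         + (P2 j l k j * W2 i l * W2 i k + P1 l k j * W3 j i l * W2 i k
            + P1 l k j * W2 i l * W3 j i k)
         + (P2 j l k l * W2 i j * W2 i k + P1 l k l * W3 j i j * W2 i k
            + P1 l k l * W2 i j * W3 j i k)
         - (1/2 * P2 j l j l * W2 i k ^ 2 + P1 l j l * (W2 i k * W3 j i k))
         - (P2 j i k l * W2 j l * W2 i k + P1 i k l * W3 j j l * W2 i k
            + P1 i k l * W2 j l * W3 j i k)))
      - S4 (fun i j k l => P k l * W3 i i l * W3 k j j)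
      + S4 (fun i j k l => P2 i j k l * W2 i j * W2 k l)
      - S4 (fun i j k l => P2 l j k l * W2 i j * W2 i k)
      - S4 (fun i j k l => P2 i l k l * W2 i j * W2 k j)
      + S4 (fun i j k l => P2 i j k l * W2 i l * W2 k j)
      + 1/2 * S4 (fun i j k l => P2 k l k l * W2 i j ^ 2)
  rw [show S4 (fun j i k l =>
        (P1 j k l * W3 i i j * W2 k l + P k l * W4 j i i j * W2 k l
            + P k l * W3 i i j * W3 j k l
         - (P1 j k j * W3 i i l * W2 k l + P k j * W4 j i i l * W2 k l
            + P k j * W3 i i l * W3 j k l)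
         + (P1 j k l * W3 i i l * W2 k j + P k l * W4 j i i l * W2 k j
            + P k l * W3 i i l * W3 j k j)
         - (P2 j i k l * W2 i j * W2 k l + P1 i k l * W3 j i j * W2 k l
            + P1 i k l * W2 i j * W3 j k l)
         + (P2 j l k j * W2 i l * W2 i k + P1 l k j * W3 j i l * W2 i k
            + P1 l k j * W2 i l * W3 j i k)
         + (P2 j l k l * W2 i j * W2 i k + P1 l k l * W3 j i j * W2 i k
            + P1 l k l * W2 i j * W3 j i k)
         - (1/2 * P2 j l j l * W2 i k ^ 2 + P1 l j l * (W2 i k * W3 j i k))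
         - (P2 j i k l * W2 j l * W2 i k + P1 i k l * W3 j j l * W2 i k
            + P1 i k l * W2 j l * W3 j i k)))
      = S4 (fun i j k l =>
        (P1 j k l * W3 i i j * W2 k l + P k l * W4 j i i j * W2 k l
            + P k l * W3 i i j * W3 j k l
         - (P1 j k j * W3 i i l * W2 k l + P k j * W4 j i i l * W2 k l
            + P k j * W3 i i l * W3 j k l)
         + (P1 j k l * W3 i i l * W2 k j + P k l * W4 j i i l * W2 k j
            + P k l * W3 i i l * W3 j k j)
         - (P2 j i k l * W2 i j * W2 k l + P1 i k l * W3 j i j * W2 k l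
            + P1 i k l * W2 i j * W3 j k l)
         + (P2 j l k j * W2 i l * W2 i k + P1 l k j * W3 j i l * W2 i k
            + P1 l k j * W2 i l * W3 j i k)
         + (P2 j l k l * W2 i j * W2 i k + P1 l k l * W3 j i j * W2 i k
            + P1 l k l * W2 i j * W3 j i k)
         - (1/2 * P2 j l j l * W2 i k ^ 2 + P1 l j l * (W2 i k * W3 j i k))
         - (P2 j i k l * W2 j l * W2 i k + P1 i k l * W3 j j l * W2 i k
            + P1 i k l * W2 j l * W3 j i k)))
      from S4_perm _ (fun p => (p.2.1, p.1, p.2.2.1, p.2.2.2))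
        (fun p => (p.2.1, p.1, p.2.2.1, p.2.2.2)) (fun _ => rfl) (fun _ => rfl), hsplit]
  linarith [e1, e2, e3, e4, e5, e6, e7, e8, e9, e10, e11, e12, e13, e14, e15]

end S4

/-- Fourth-order divergence identity (identity `I₁₃` of the appendix):
for a `C⁴` function `w` and symmetric `C²` coefficients `Φ^{kl}`, the pointwise identity
`Σ Φ^{kl} w_{iijj} w_{kl} = Σ_j ∂_j [⋯] + volume terms` holds on `ℝⁿ`. -/
theorem stmt_7 (n : ℕ) (hn : 1 ≤ n)
    (w : EuclideanSpace ℝ (Fin n) → ℝ) (hw : ContDiff ℝ 4 w)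
    (Φ : Fin n → Fin n → EuclideanSpace ℝ (Fin n) → ℝ)
    (hΦ : ∀ k l, ContDiff ℝ 2 (Φ k l))
    (hΦsymm : ∀ k l, Φ k l = Φ l k) :
    ∀ x : EuclideanSpace ℝ (Fin n),
      (∑ i : Fin n, ∑ j : Fin n, ∑ k : Fin n, ∑ l : Fin n,
          Φ k l x * pderiv' i (pderiv' i (pderiv' j (pderiv' j w))) x
            * pderiv' k (pderiv' l w) x)
      =
      (∑ j : Fin n,
          pderiv' j (fun y =>
            ∑ i : Fin n, ∑ k : Fin n, ∑ l : Fin n,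
              (Φ k l y * pderiv' i (pderiv' i (pderiv' j w)) y * pderiv' k (pderiv' l w) y
               - Φ k j y * pderiv' i (pderiv' i (pderiv' l w)) y * pderiv' k (pderiv' l w) y
               + Φ k l y * pderiv' i (pderiv' i (pderiv' l w)) y * pderiv' k (pderiv' j w) y
               - pderiv' i (Φ k l) y * pderiv' i (pderiv' j w) y * pderiv' k (pderiv' l w) y
               + pderiv' l (Φ k j) y * pderiv' i (pderiv' l w) y * pderiv' i (pderiv' k w) y
               + pderiv' l (Φ k l) y * pderiv' i (pderiv' j w) y * pderiv' i (pderiv' k w) y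
               - (1 / 2) * pderiv' l (Φ j l) y * (pderiv' i (pderiv' k w) y) ^ 2
               - pderiv' i (Φ k l) y * pderiv' j (pderiv' l w) y * pderiv' i (pderiv' k w) y)) x)
      - (∑ i : Fin n, ∑ j : Fin n, ∑ k : Fin n, ∑ l : Fin n,
          Φ k l x * pderiv' i (pderiv' i (pderiv' l w)) x
            * pderiv' k (pderiv' j (pderiv' j w)) x)
      + (∑ i : Fin n, ∑ j : Fin n, ∑ k : Fin n, ∑ l : Fin n,
          pderiv' i (pderiv' j (Φ k l)) x * pderiv' i (pderiv' j w) x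
            * pderiv' k (pderiv' l w) x)
      - (∑ i : Fin n, ∑ j : Fin n, ∑ k : Fin n, ∑ l : Fin n,
          pderiv' l (pderiv' j (Φ k l)) x * pderiv' i (pderiv' j w) x
            * pderiv' i (pderiv' k w) x)
      - (∑ i : Fin n, ∑ j : Fin n, ∑ k : Fin n, ∑ l : Fin n,
          pderiv' i (pderiv' l (Φ k l)) x * pderiv' i (pderiv' j w) x
            * pderiv' k (pderiv' j w) x)
      + (∑ i : Fin n, ∑ j : Fin n, ∑ k : Fin n, ∑ l : Fin n,
          pderiv' i (pderiv' j (Φ k l)) x * pderiv' i (pderiv' l w) x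
            * pderiv' k (pderiv' j w) x)
      + (1 / 2) * (∑ i : Fin n, ∑ j : Fin n, ∑ k : Fin n, ∑ l : Fin n,
          pderiv' k (pderiv' l (Φ k l)) x * (pderiv' i (pderiv' j w) x) ^ 2) := by
  intro x
  -- regularity bookkeeping
  have hw4 : ContDiff ℝ ((3:ℕ) + 1 : ℕ) w := by exact_mod_cast hw
  have hw3 : ∀ d, ContDiff ℝ 3 (pderiv' d w) := fun d => by
    exact_mod_cast contDiff_pderiv' hw4 d
  have hw3' : ∀ d : Fin n, ContDiff ℝ ((2:ℕ) + 1 : ℕ) (pderiv' d w) := fun d => by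
    exact_mod_cast hw3 d
  have hw2 : ∀ c d, ContDiff ℝ 2 (pderiv' c (pderiv' d w)) := fun c d => by
    exact_mod_cast contDiff_pderiv' (hw3' d) c
  have dΦ : ∀ k l, Differentiable ℝ (Φ k l) := fun k l => (hΦ k l).differentiable (by norm_num)
  have dΦ1 : ∀ a k l, Differentiable ℝ (pderiv' a (Φ k l)) := fun a k l =>
    differentiable_pderiv' (hΦ k l) a
  have dw2 : ∀ c d, Differentiable ℝ (pderiv' c (pderiv' d w)) := fun c d =>
    (hw2 c d).differentiable (by norm_num)
  have dw3 : ∀ b c d, Differentiable ℝ (pderiv' b (pderiv' c (pderiv' d w))) := fun b c d =>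
    differentiable_pderiv' (hw2 c d) b
  -- commutation of partial derivatives
  have c34 : ∀ c d, pderiv' c (pderiv' d w) = pderiv' d (pderiv' c w) := fun c d =>
    pderiv'_comm (hw.of_le (by norm_num)) c d
  have c23 : ∀ b c d, pderiv' b (pderiv' c (pderiv' d w))
      = pderiv' c (pderiv' b (pderiv' d w)) := fun b c d =>
    pderiv'_comm ((hw3 d).of_le (by norm_num)) b c
  have c12 : ∀ a b c d, pderiv' a (pderiv' b (pderiv' c (pderiv' d w)))
      = pderiv' b (pderiv' a (pderiv' c (pderiv' d w))) := fun a b c d =>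
    pderiv'_comm (hw2 c d) a b
  have cΦ : ∀ a b k l, pderiv' a (pderiv' b (Φ k l)) = pderiv' b (pderiv' a (Φ k l)) :=
    fun a b k l => pderiv'_comm (hΦ k l) a b
  -- hypotheses for the algebraic lemma
  have hP1' : ∀ a k l : Fin n, pderiv' a (Φ k l) x = pderiv' a (Φ l k) x := fun a k l => by
    rw [hΦsymm k l]
  have hP2' : ∀ a b k l : Fin n, pderiv' a (pderiv' b (Φ k l)) x
      = pderiv' b (pderiv' a (Φ k l)) x := fun a b k l => congrFun (cΦ a b k l) x
  have hW2' : ∀ a b : Fin n, pderiv' a (pderiv' b w) x = pderiv' b (pderiv' a w) x :=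
    fun a b => congrFun (c34 a b) x
  have hW3a' : ∀ a b c : Fin n, pderiv' a (pderiv' b (pderiv' c w)) x
      = pderiv' b (pderiv' a (pderiv' c w)) x := fun a b c => congrFun (c23 a b c) x
  have hW3b' : ∀ a b c : Fin n, pderiv' a (pderiv' b (pderiv' c w)) x
      = pderiv' a (pderiv' c (pderiv' b w)) x := fun a b c => by rw [c34 b c]
  have hW4a' : ∀ i j : Fin n, pderiv' j (pderiv' i (pderiv' i (pderiv' j w))) x
      = pderiv' i (pderiv' i (pderiv' j (pderiv' j w))) x := fun i j => by
    rw [c12 j i i j, c23 j i j]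
  have hW4r' : ∀ a b c d : Fin n, pderiv' a (pderiv' b (pderiv' c (pderiv' d w))) x
      = pderiv' d (pderiv' c (pderiv' b (pderiv' a w))) x := fun a b c d => by
    conv_lhs => rw [c34 c d, c23 b d c, c12 a d b c, c34 b c, c23 a c b, c34 a b]
  -- differentiability of the summand of the bracket
  have hd : ∀ j i k l : Fin n, DifferentiableAt ℝ (fun y =>
      Φ k l y * pderiv' i (pderiv' i (pderiv' j w)) y * pderiv' k (pderiv' l w) y
      - Φ k j y * pderiv' i (pderiv' i (pderiv' l w)) y * pderiv' k (pderiv' l w) y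
      + Φ k l y * pderiv' i (pderiv' i (pderiv' l w)) y * pderiv' k (pderiv' j w) y
      - pderiv' i (Φ k l) y * pderiv' i (pderiv' j w) y * pderiv' k (pderiv' l w) y
      + pderiv' l (Φ k j) y * pderiv' i (pderiv' l w) y * pderiv' i (pderiv' k w) y
      + pderiv' l (Φ k l) y * pderiv' i (pderiv' j w) y * pderiv' i (pderiv' k w) y
      - (1 / 2) * pderiv' l (Φ j l) y * (pderiv' i (pderiv' k w) y) ^ 2
      - pderiv' i (Φ k l) y * pderiv' j (pderiv' l w) y * pderiv' i (pderiv' k w) y) x :=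
    fun j i k l =>
      ((((((((dΦ k l x).mul (dw3 i i j x)).mul (dw2 k l x)).sub
        (((dΦ k j x).mul (dw3 i i l x)).mul (dw2 k l x))).add
        (((dΦ k l x).mul (dw3 i i l x)).mul (dw2 k j x))).sub
        (((dΦ1 i k l x).mul (dw2 i j x)).mul (dw2 k l x))).add
        (((dΦ1 l k j x).mul (dw2 i l x)).mul (dw2 i k x))).add
        (((dΦ1 l k l x).mul (dw2 i j x)).mul (dw2 i k x))).sub
        ((((differentiableAt_const _).mul (dΦ1 l j l x)).mul ((dw2 i k x).pow 2))) |>.sub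
        (((dΦ1 i k l x).mul (dw2 j l x)).mul (dw2 i k x))
  -- expansion of the divergence term
  have hbr : ∀ j : Fin n,
      pderiv' j (fun y =>
        ∑ i : Fin n, ∑ k : Fin n, ∑ l : Fin n,
          (Φ k l y * pderiv' i (pderiv' i (pderiv' j w)) y * pderiv' k (pderiv' l w) y
           - Φ k j y * pderiv' i (pderiv' i (pderiv' l w)) y * pderiv' k (pderiv' l w) y
           + Φ k l y * pderiv' i (pderiv' i (pderiv' l w)) y * pderiv' k (pderiv' j w) y
           - pderiv' i (Φ k l) y * pderiv' i (pderiv' j w) y * pderiv' k (pderiv' l w) y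
           + pderiv' l (Φ k j) y * pderiv' i (pderiv' l w) y * pderiv' i (pderiv' k w) y
           + pderiv' l (Φ k l) y * pderiv' i (pderiv' j w) y * pderiv' i (pderiv' k w) y
           - (1 / 2) * pderiv' l (Φ j l) y * (pderiv' i (pderiv' k w) y) ^ 2
           - pderiv' i (Φ k l) y * pderiv' j (pderiv' l w) y * pderiv' i (pderiv' k w) y)) x
      = ∑ i : Fin n, ∑ k : Fin n, ∑ l : Fin n,
          ((pderiv' j (Φ k l) x * pderiv' i (pderiv' i (pderiv' j w)) x
              * pderiv' k (pderiv' l w) x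
            + Φ k l x * pderiv' j (pderiv' i (pderiv' i (pderiv' j w))) x
              * pderiv' k (pderiv' l w) x
            + Φ k l x * pderiv' i (pderiv' i (pderiv' j w)) x
              * pderiv' j (pderiv' k (pderiv' l w)) x)
          - (pderiv' j (Φ k j) x * pderiv' i (pderiv' i (pderiv' l w)) x
              * pderiv' k (pderiv' l w) x
            + Φ k j x * pderiv' j (pderiv' i (pderiv' i (pderiv' l w))) x
              * pderiv' k (pderiv' l w) x
            + Φ k j x * pderiv' i (pderiv' i (pderiv' l w)) x
              * pderiv' j (pderiv' k (pderiv' l w)) x)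
          + (pderiv' j (Φ k l) x * pderiv' i (pderiv' i (pderiv' l w)) x
              * pderiv' k (pderiv' j w) x
            + Φ k l x * pderiv' j (pderiv' i (pderiv' i (pderiv' l w))) x
              * pderiv' k (pderiv' j w) x
            + Φ k l x * pderiv' i (pderiv' i (pderiv' l w)) x
              * pderiv' j (pderiv' k (pderiv' j w)) x)
          - (pderiv' j (pderiv' i (Φ k l)) x * pderiv' i (pderiv' j w) x
              * pderiv' k (pderiv' l w) x
            + pderiv' i (Φ k l) x * pderiv' j (pderiv' i (pderiv' j w)) x
              * pderiv' k (pderiv' l w) x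
            + pderiv' i (Φ k l) x * pderiv' i (pderiv' j w) x
              * pderiv' j (pderiv' k (pderiv' l w)) x)
          + (pderiv' j (pderiv' l (Φ k j)) x * pderiv' i (pderiv' l w) x
              * pderiv' i (pderiv' k w) x
            + pderiv' l (Φ k j) x * pderiv' j (pderiv' i (pderiv' l w)) x
              * pderiv' i (pderiv' k w) x
            + pderiv' l (Φ k j) x * pderiv' i (pderiv' l w) x
              * pderiv' j (pderiv' i (pderiv' k w)) x)
          + (pderiv' j (pderiv' l (Φ k l)) x * pderiv' i (pderiv' j w) x
              * pderiv' i (pderiv' k w) x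
            + pderiv' l (Φ k l) x * pderiv' j (pderiv' i (pderiv' j w)) x
              * pderiv' i (pderiv' k w) x
            + pderiv' l (Φ k l) x * pderiv' i (pderiv' j w) x
              * pderiv' j (pderiv' i (pderiv' k w)) x)
          - (1 / 2 * pderiv' j (pderiv' l (Φ j l)) x * pderiv' i (pderiv' k w) x ^ 2
            + pderiv' l (Φ j l) x * (pderiv' i (pderiv' k w) x
              * pderiv' j (pderiv' i (pderiv' k w)) x))
          - (pderiv' j (pderiv' i (Φ k l)) x * pderiv' j (pderiv' l w) x
              * pderiv' i (pderiv' k w) x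
            + pderiv' i (Φ k l) x * pderiv' j (pderiv' j (pderiv' l w)) x
              * pderiv' i (pderiv' k w) x
            + pderiv' i (Φ k l) x * pderiv' j (pderiv' l w) x
              * pderiv' j (pderiv' i (pderiv' k w)) x)) := by
    intro j
    refine (pderiv'_sum Finset.univ _ fun i _ =>
      DifferentiableAt.fun_sum fun k _ => DifferentiableAt.fun_sum fun l _ => hd j i k l).trans ?_
    refine Finset.sum_congr rfl fun i _ => ?_
    refine (pderiv'_sum Finset.univ _ fun k _ =>
      DifferentiableAt.fun_sum fun l _ => hd j i k l).trans ?_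
    refine Finset.sum_congr rfl fun k _ => ?_
    refine (pderiv'_sum Finset.univ _ fun l _ => hd j i k l).trans ?_
    refine Finset.sum_congr rfl fun l _ => ?_
    exact pderiv'_key _ _ _ _ _ _ _ _ _ _ _ _ _ _ _ _ _ _ _ _ _ _ _
      (dΦ k l x) (dw3 i i j x) (dw2 k l x)
      (dΦ k j x) (dw3 i i l x) (dw2 k l x)
      (dΦ k l x) (dw3 i i l x) (dw2 k j x)
      (dΦ1 i k l x) (dw2 i j x) (dw2 k l x)
      (dΦ1 l k j x) (dw2 i l x) (dw2 i k x)
      (dΦ1 l k l x) (dw2 i j x) (dw2 i k x)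
      (dΦ1 l j l x) (dw2 i k x)
      (dΦ1 i k l x) (dw2 j l x) (dw2 i k x)
  rw [Finset.sum_congr rfl fun j (_ : j ∈ Finset.univ) => hbr j]
  exact alg (fun k l => Φ k l x) (fun a k l => pderiv' a (Φ k l) x)
    (fun a b k l => pderiv' a (pderiv' b (Φ k l)) x)
    (fun a b => pderiv' a (pderiv' b w) x)
    (fun a b c => pderiv' a (pderiv' b (pderiv' c w)) x)
    (fun a b c d => pderiv' a (pderiv' b (pderiv' c (pderiv' d w))) x)
    hP1' hP2' hW2' hW3a' hW3b' hW4a' hW4r'
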